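/- There exists κ₀ > 0 such that: (1) for every κ ∈ [0, κ₀) there exists a_κ with 0 < a_κ < φ*_κ such that e^φ − G_κ(φ) ≥ 0 for all φ in the domain of G_κ with φ ≤ a_κ, and e^φ − G_κ(φ) ≤ 0 for all φ in the domain of G_κ with φ ≥ a_κ; moreover a_κ → a₀ as κ → 0⁺; (2) for every δ > 0 there exist c = c(δ) > 0 and κ_δ ∈ (0, κ₀) such that for all κ ∈ [0, κ_δ) and all φ in the domain of G_κ with 0 ≤ φ ≤ a_κ − δ, one has e^φ − G_κ(φ) ≥ c·φ. -/

import Mathlib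

open Filter Topology

/-- `H_κ(ρ) = (c_κ²/2)·(1 − 1/ρ²) − κ·ln ρ`. -/
noncomputable def Hfun (κ c ρ : ℝ) : ℝ := c ^ 2 / 2 * (1 - 1 / ρ ^ 2) - κ * Real.log ρ

/-- `φ*_κ`: the right endpoint of the range of the increasing branch of `H_κ`;
`φ*_κ = H_κ(c_κ/√κ)` for `κ > 0` and `φ*_0 = c₀²/2`. -/
noncomputable def phiStar (κ c : ℝ) : ℝ :=
  if κ = 0 then c ^ 2 / 2 else Hfun κ c (c / Real.sqrt κ)

/-- The domain of `G_κ`: `[0, φ*_κ]` for `κ > 0` and `[0, φ*_0)` for `κ = 0`. -/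
noncomputable def Gdom (κ c : ℝ) : Set ℝ :=
  if κ = 0 then Set.Ico 0 (c ^ 2 / 2) else Set.Icc 0 (phiStar κ c)

open Set

noncomputable def Ffun (b l ρ : ℝ) : ℝ := b / 2 * (1 - 1 / ρ ^ 2) - l * Real.log ρ

lemma Ffun_one (b l : ℝ) : Ffun b l 1 = 0 := by simp [Ffun]

lemma Ffun_hasDeriv (b l : ℝ) {ρ : ℝ} (hρ : 0 < ρ) :
    HasDerivAt (Ffun b l) ((b - l * ρ ^ 2) / ρ ^ 3) ρ := by
  have h2 : HasDerivAt (fun x : ℝ => x ^ 2) (2 * ρ) ρ := by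
    simpa using hasDerivAt_pow 2 ρ
  have hinv : HasDerivAt (fun x : ℝ => 1 / x ^ 2) (-(2 * ρ) / (ρ ^ 2) ^ 2) ρ := by
    simpa [one_div] using h2.fun_inv (by positivity)
  have hlog : HasDerivAt Real.log ρ⁻¹ ρ := Real.hasDerivAt_log (ne_of_gt hρ)
  have h := (((hasDerivAt_const ρ (1:ℝ)).sub hinv).const_mul (b / 2)).sub
    (hlog.const_mul l)
  refine h.congr_deriv ?_
  field_simp
  ring

lemma Ffun_contOn (b l : ℝ) {s : Set ℝ} (hs : s ⊆ Set.Ioi 0) :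
    ContinuousOn (Ffun b l) s := fun x hx =>
  ((Ffun_hasDeriv b l (hs hx)).continuousAt).continuousWithinAt

lemma Ffun_mono {b l s : ℝ} (hb : 0 < b) (hl : 0 ≤ l) (hs : 1 ≤ s)
    (h : l * s ^ 2 ≤ b) : StrictMonoOn (Ffun b l) (Set.Icc 1 s) := by
  apply strictMonoOn_of_deriv_pos (convex_Icc 1 s)
  · exact Ffun_contOn b l (fun x hx => lt_of_lt_of_le one_pos hx.1)
  · intro x hx
    rw [interior_Icc] at hx
    rw [(Ffun_hasDeriv b l (lt_trans one_pos hx.1)).deriv]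
    have hx1 : (1:ℝ) < x := hx.1
    have hx2 : x < s := hx.2
    apply div_pos _ (by positivity)
    rcases eq_or_lt_of_le hl with h0 | h0
    · nlinarith
    · nlinarith [mul_lt_mul_of_pos_left (by nlinarith : x ^ 2 < s ^ 2) h0]

lemma Ffun_anti {b l s : ℝ} (hs : 0 < s) (hl : 0 < l) (h : b ≤ l * s ^ 2) :
    StrictAntiOn (Ffun b l) (Set.Ici s) := by
  apply strictAntiOn_of_deriv_neg (convex_Ici s)
  · exact Ffun_contOn b l (fun x hx => lt_of_lt_of_le hs hx)
  · intro x hx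
    rw [interior_Ici] at hx
    have hxs : s < x := hx
    rw [(Ffun_hasDeriv b l (lt_trans hs hxs)).deriv]
    apply div_neg_of_neg_of_pos _ (pow_pos (lt_trans hs hxs) 3)
    nlinarith [mul_lt_mul_of_pos_left (by nlinarith : s ^ 2 < x ^ 2) hl]

/-- Root of `Ffun b l` past the peak. -/
lemma Ffun_root {b l : ℝ} (hl : 1 ≤ l) (hlb : l < b) (hb : b ≤ 64) :
    ∃ r : ℝ, Real.sqrt (b / l) < r ∧ r ≤ Real.exp 33 ∧ Ffun b l r = 0 := by
  have hl0 : (0:ℝ) < l := lt_of_lt_of_le one_pos hl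
  have hb0 : (0:ℝ) < b := lt_trans hl0 hlb
  set s := Real.sqrt (b / l) with hsdef
  have hs1 : 1 < s := by
    rw [hsdef, show (1:ℝ) = Real.sqrt 1 by simp]
    exact Real.sqrt_lt_sqrt (by norm_num) ((one_lt_div hl0).2 hlb)
  have hs0 : 0 < s := lt_trans one_pos hs1
  have hssq : l * s ^ 2 = b := by
    rw [hsdef, Real.sq_sqrt (by positivity)]
    field_simp
  have hsle : s ≤ Real.exp 33 := by
    have : s ≤ 8 := by
      rw [hsdef]
      rw [show (8:ℝ) = Real.sqrt 64 by
        rw [show (64:ℝ) = 8 ^ 2 by norm_num, Real.sqrt_sq]; norm_num]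
      apply Real.sqrt_le_sqrt
      calc b / l ≤ b / 1 := by apply div_le_div_of_nonneg_left (le_of_lt hb0) one_pos hl
        _ ≤ 64 := by simpa using hb
    calc s ≤ 8 := this
      _ ≤ Real.exp 33 := by
          nlinarith [Real.add_one_le_exp (33:ℝ)]
  -- F s > 0
  have hFs : 0 < Ffun b l s := by
    have := Ffun_mono hb0 (le_of_lt hl0) (le_of_lt hs1) (le_of_eq hssq)
      (Set.left_mem_Icc.2 (le_of_lt hs1)) (Set.right_mem_Icc.2 (le_of_lt hs1)) hs1
    rwa [Ffun_one] at this
  -- F (exp 33) < 0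
  have hFe : Ffun b l (Real.exp 33) < 0 := by
    have he : (1:ℝ) ≤ Real.exp 33 := Real.one_le_exp (by norm_num)
    have hlog : Real.log (Real.exp 33) = 33 := Real.log_exp 33
    have h1 : b / 2 * (1 - 1 / (Real.exp 33) ^ 2) ≤ 32 := by
      have h2 : (1 - 1 / (Real.exp 33) ^ 2) ≤ 1 := by
        have : 0 ≤ 1 / (Real.exp 33) ^ 2 := by positivity
        linarith
      have h3 : 0 ≤ (1 - 1 / (Real.exp 33) ^ 2) := by
        have : 1 / (Real.exp 33) ^ 2 ≤ 1 := by
          rw [div_le_one (by positivity)]; nlinarith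
        linarith
      nlinarith
    have h4 : 33 ≤ l * Real.log (Real.exp 33) := by rw [hlog]; nlinarith
    unfold Ffun
    linarith
  obtain ⟨r, hr, hr0⟩ := intermediate_value_Icc' hsle
    (Ffun_contOn b l (fun x hx => lt_of_lt_of_le hs0 hx.1)) ⟨le_of_lt hFe, le_of_lt hFs⟩
  refine ⟨r, ?_, hr.2, hr0⟩
  rcases eq_or_lt_of_le hr.1 with h | h
  · exfalso; rw [← h] at hr0; rw [hr0] at hFs; exact lt_irrefl 0 hFs
  · exact h

lemma Ffun_nonneg {b l r : ℝ} (hl : 0 < l) (hlb : l < b)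
    (hr : Real.sqrt (b / l) < r) (hr0 : Ffun b l r = 0) :
    ∀ x, 1 ≤ x → x ≤ r → 0 ≤ Ffun b l x := by
  intro x hx1 hxr
  set s := Real.sqrt (b / l) with hsdef
  have hb0 : (0:ℝ) < b := lt_trans hl hlb
  have hs1 : 1 < s := by
    rw [hsdef, show (1:ℝ) = Real.sqrt 1 by simp]
    exact Real.sqrt_lt_sqrt (by norm_num) ((one_lt_div hl).2 hlb)
  have hssq : l * s ^ 2 = b := by
    rw [hsdef, Real.sq_sqrt (by positivity)]
    field_simp
  rcases le_or_gt x s with hxs | hxs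
  · have := (Ffun_mono hb0 (le_of_lt hl) (le_of_lt hs1) (le_of_eq hssq)).monotoneOn
      (Set.left_mem_Icc.2 (le_of_lt hs1)) ⟨hx1, hxs⟩ hx1
    rwa [Ffun_one] at this
  · have := (Ffun_anti (lt_trans one_pos hs1) hl (le_of_eq hssq.symm)).antitoneOn
      (Set.mem_Ici.2 (le_of_lt hxs)) (Set.mem_Ici.2 (le_trans (le_of_lt hxs) hxr)) hxr
    rw [hr0] at this; exact this

lemma Ffun_pos {b l r : ℝ} (hl : 0 < l) (hlb : l < b)
    (hr : Real.sqrt (b / l) < r) (hr0 : Ffun b l r = 0) :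
    ∀ x, 1 < x → x < r → 0 < Ffun b l x := by
  intro x hx1 hxr
  set s := Real.sqrt (b / l) with hsdef
  have hb0 : (0:ℝ) < b := lt_trans hl hlb
  have hs1 : 1 < s := by
    rw [hsdef, show (1:ℝ) = Real.sqrt 1 by simp]
    exact Real.sqrt_lt_sqrt (by norm_num) ((one_lt_div hl).2 hlb)
  have hssq : l * s ^ 2 = b := by
    rw [hsdef, Real.sq_sqrt (by positivity)]
    field_simp
  rcases le_or_gt x s with hxs | hxs
  · have := Ffun_mono hb0 (le_of_lt hl) (le_of_lt hs1) (le_of_eq hssq)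
      (Set.left_mem_Icc.2 (le_of_lt hs1)) ⟨le_of_lt hx1, hxs⟩ hx1
    rwa [Ffun_one] at this
  · have := Ffun_anti (lt_trans one_pos hs1) hl (le_of_eq hssq.symm)
      (Set.mem_Ici.2 (le_of_lt hxs)) (Set.mem_Ici.2 (le_trans (le_of_lt hxs) (le_of_lt hxr))) hxr
    rw [hr0] at this; exact this

lemma Ffun_nonpos {b l r : ℝ} (hl : 0 < l) (hlb : l < b)
    (hr : Real.sqrt (b / l) < r) (hr0 : Ffun b l r = 0) :
    ∀ x, r ≤ x → Ffun b l x ≤ 0 := by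
  intro x hxr
  have hb0 : (0:ℝ) < b := lt_trans hl hlb
  have hs0 : 0 < Real.sqrt (b / l) := by positivity
  have hssq : b ≤ l * Real.sqrt (b / l) ^ 2 := by
    rw [Real.sq_sqrt (by positivity)]
    field_simp
    norm_num
  have := (Ffun_anti hs0 hl hssq).antitoneOn (Set.mem_Ici.2 (le_of_lt hr))
    (Set.mem_Ici.2 (le_trans (le_of_lt hr) hxr)) hxr
  rw [hr0] at this; exact this

lemma Ffun_neg {b l r : ℝ} (hl : 0 < l) (hlb : l < b)
    (hr : Real.sqrt (b / l) < r) (hr0 : Ffun b l r = 0) :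
    ∀ x, r < x → Ffun b l x < 0 := by
  intro x hxr
  have hb0 : (0:ℝ) < b := lt_trans hl hlb
  have hs0 : 0 < Real.sqrt (b / l) := by positivity
  have hssq : b ≤ l * Real.sqrt (b / l) ^ 2 := by
    rw [Real.sq_sqrt (by positivity)]
    field_simp
    norm_num
  have := Ffun_anti hs0 hl hssq (Set.mem_Ici.2 (le_of_lt hr))
    (Set.mem_Ici.2 (le_trans (le_of_lt hr) (le_of_lt hxr))) hxr
  rw [hr0] at this; exact this

/-- log is 1-Lipschitz on `[1, ∞)`. -/
lemma log_lip {x y : ℝ} (hx : 1 ≤ x) (hxy : x ≤ y) :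
    Real.log y - Real.log x ≤ y - x := by
  have hx0 : 0 < x := lt_of_lt_of_le one_pos hx
  have hy0 : 0 < y := lt_of_lt_of_le hx0 hxy
  rw [← Real.log_div (ne_of_gt hy0) (ne_of_gt hx0)]
  have := Real.log_le_sub_one_of_pos (x := y / x) (by positivity)
  have h2 : y / x - 1 ≤ y - x := by
    rw [div_sub_one (ne_of_gt hx0), div_le_iff₀ hx0]
    nlinarith
  linarith

lemma abs_log_sub_le {x y : ℝ} (hx : 1 ≤ x) (hy : 1 ≤ y) :
    |Real.log x - Real.log y| ≤ |x - y| := by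
  rcases le_total x y with h | h
  · rw [abs_sub_comm, abs_of_nonneg (by linarith [log_lip hx h, Real.log_le_log (lt_of_lt_of_le one_pos hx) h] : (0:ℝ) ≤ Real.log y - Real.log x), abs_sub_comm, abs_of_nonneg (by linarith : (0:ℝ) ≤ y - x)]
    exact log_lip hx h
  · rw [abs_of_nonneg (by linarith [Real.log_le_log (lt_of_lt_of_le one_pos hy) h] : (0:ℝ) ≤ Real.log x - Real.log y), abs_of_nonneg (by linarith : (0:ℝ) ≤ x - y)]
    exact log_lip hy h

lemma log_le_two_sqrt {y : ℝ} (hy : 0 < y) : Real.log y ≤ 2 * Real.sqrt y - 2 := by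
  have h := Real.log_le_sub_one_of_pos (Real.sqrt_pos.2 hy)
  have h2 : Real.log (Real.sqrt y) = Real.log y / 2 := Real.log_sqrt (le_of_lt hy)
  rw [h2] at h
  linarith

noncomputable def Phi0 (z : ℝ) : ℝ := Real.log (z ^ 2 + 1) - z ^ 2 / 2

lemma Phi0_hasDeriv (z : ℝ) :
    HasDerivAt Phi0 (2 * z / (z ^ 2 + 1) - z) z := by
  have h2 : HasDerivAt (fun x : ℝ => x ^ 2 + 1) (2 * z) z := by
    simpa using (hasDerivAt_pow 2 z).add_const 1
  have hlog := h2.log (by positivity)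
  have := hlog.sub ((hasDerivAt_pow 2 z).div_const 2)
  exact this.congr_deriv (by norm_num)

lemma Phi0_anti : StrictAntiOn Phi0 (Set.Ici 1) := by
  apply strictAntiOn_of_deriv_neg (convex_Ici 1)
  · exact fun x _ => (Phi0_hasDeriv x).continuousAt.continuousWithinAt
  · intro x hx
    rw [interior_Ici] at hx
    have hx1 : (1:ℝ) < x := hx
    rw [(Phi0_hasDeriv x).deriv]
    rw [div_sub' (by positivity), div_neg_iff]
    right
    constructor
    · nlinarith
    · positivity

lemma exp_le_quad {x : ℝ} (h0 : 0 ≤ x) (h1 : x ≤ 1) :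
    Real.exp x ≤ 1 + x + x ^ 2 := by
  have hb := Real.exp_bound (x := x) (by rw [abs_of_nonneg h0]; exact h1) (n := 2) (by norm_num)
  have hsum : ∑ m ∈ Finset.range 2, x ^ m / (Nat.factorial m : ℝ) = 1 + x := by
    simp [Finset.sum_range_succ]
  rw [hsum, abs_of_nonneg h0] at hb
  have := abs_le.1 hb
  have h2 : x ^ 2 * ((3:ℝ) / (2 * 2)) ≤ x ^ 2 := by nlinarith [sq_nonneg x]
  have h3 := this.1
  have h4 := this.2
  norm_num at h4
  nlinarith

lemma kappa_log_bound {κ : ℝ} (h0 : 0 < κ) (h1 : κ ≤ 1) :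
    -(κ / 2 * Real.log κ) ≤ Real.sqrt κ := by
  have hs0 : 0 < Real.sqrt κ := Real.sqrt_pos.2 h0
  have hss : Real.sqrt κ * Real.sqrt κ = κ := Real.mul_self_sqrt (le_of_lt h0)
  have hlh : Real.log (Real.sqrt κ) = Real.log κ / 2 := Real.log_sqrt (le_of_lt h0)
  have hinv := Real.log_le_sub_one_of_pos (x := 1 / Real.sqrt κ) (by positivity)
  rw [Real.log_div one_ne_zero (ne_of_gt hs0), Real.log_one, hlh] at hinv
  -- hinv : 0 - log κ / 2 ≤ 1 / √κ - 1
  have h2 : -(Real.log κ / 2) ≤ 1 / Real.sqrt κ := by linarith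
  have h3 : -(κ / 2 * Real.log κ) = κ * (-(Real.log κ / 2)) := by ring
  rw [h3]
  calc κ * (-(Real.log κ / 2)) ≤ κ * (1 / Real.sqrt κ) := by
        apply mul_le_mul_of_nonneg_left h2 (le_of_lt h0)
    _ = Real.sqrt κ := by
        field_simp
        rw [Real.sq_sqrt (le_of_lt h0)]
lemma c0_sq_gt_two {c0 : ℝ} (hc01 : 1 < c0)
    (hc0eq : c0 ^ 2 + 1 = Real.exp (c0 ^ 2 / 2)) : 2 < c0 ^ 2 := by
  by_contra h
  push_neg at h
  have ht1 : 1 < c0 ^ 2 := by nlinarith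
  rcases lt_or_eq_of_le h with h2 | h2
  · have hq := exp_le_quad (x := c0 ^ 2 / 2) (by linarith) (by linarith)
    nlinarith
  · rw [h2] at hc0eq
    norm_num at hc0eq
    have := Real.exp_one_lt_d9
    rw [← hc0eq] at this
    norm_num at this

lemma c0_lt_five {c0 : ℝ} (hc01 : 1 < c0)
    (hc0eq : c0 ^ 2 + 1 = Real.exp (c0 ^ 2 / 2)) : c0 < 5 := by
  have hlog0 : Real.log (c0 ^ 2 + 1) = c0 ^ 2 / 2 := by
    rw [hc0eq, Real.log_exp]
  have h1 := log_le_two_sqrt (y := c0 ^ 2 + 1) (by positivity)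
  rw [hlog0] at h1
  have hu2 : Real.sqrt (c0 ^ 2 + 1) ^ 2 = c0 ^ 2 + 1 := Real.sq_sqrt (by positivity)
  have hu0 : 0 ≤ Real.sqrt (c0 ^ 2 + 1) := Real.sqrt_nonneg _
  set u := Real.sqrt (c0 ^ 2 + 1) with hu
  have h2 : u ≤ 3 := by nlinarith [sq_nonneg (u - 3)]
  have h3 : c0 ^ 2 ≤ 8 := by nlinarith
  nlinarith

section cfacts
variable {c : ℝ → ℝ}
  (hck : ∀ κ : ℝ, 0 < κ → Real.sqrt (1 + κ) < c κ ∧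
      (c κ) ^ κ * ((c κ - Real.sqrt κ) ^ 2 + 1)
        = Real.exp (((c κ) ^ 2 - κ) / 2) * κ ^ (κ / 2))

include hck

lemma c_gt_one {κ : ℝ} (hκ : 0 < κ) : 1 < c κ := by
  have h := (hck κ hκ).1
  have h2 : (1:ℝ) ≤ Real.sqrt (1 + κ) := by
    have h3 : Real.sqrt 1 ≤ Real.sqrt (1 + κ) := Real.sqrt_le_sqrt (by linarith)
    rwa [Real.sqrt_one] at h3
  linarith

lemma c_sq_gt {κ : ℝ} (hκ : 0 < κ) : 1 + κ < (c κ) ^ 2 := by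
  have h := (hck κ hκ).1
  have h2 : Real.sqrt (1 + κ) ^ 2 = 1 + κ := Real.sq_sqrt (by linarith)
  nlinarith [Real.sqrt_nonneg (1 + κ)]

lemma c_log_eq {κ : ℝ} (hκ : 0 < κ) :
    κ * Real.log (c κ) + Real.log ((c κ - Real.sqrt κ) ^ 2 + 1)
      = ((c κ) ^ 2 - κ) / 2 + κ / 2 * Real.log κ := by
  have hc1 : (0:ℝ) < c κ := lt_trans one_pos (c_gt_one hck hκ)
  have hu : (0:ℝ) < (c κ - Real.sqrt κ) ^ 2 + 1 := by positivity
  have h := congrArg Real.log (hck κ hκ).2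
  rw [Real.log_mul (ne_of_gt (Real.rpow_pos_of_pos hc1 κ)) (ne_of_gt hu),
    Real.log_mul (ne_of_gt (Real.exp_pos _)) (ne_of_gt (Real.rpow_pos_of_pos hκ (κ / 2))),
    Real.log_rpow hc1, Real.log_rpow hκ, Real.log_exp] at h
  linarith [h]

lemma c_lt_eight {κ : ℝ} (hκ : 0 < κ) (hκ1 : κ < 1) : c κ < 8 := by
  by_contra h8
  push_neg at h8
  have hc1 : 1 < c κ := c_gt_one hck hκ
  have heq := c_log_eq hck hκ
  have hsκ : 0 ≤ Real.sqrt κ := Real.sqrt_nonneg κ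
  have hsκ1 : Real.sqrt κ ≤ 1 := by
    have h3 : Real.sqrt κ ≤ Real.sqrt 1 := Real.sqrt_le_sqrt (le_of_lt hκ1)
    rwa [Real.sqrt_one] at h3
  have hs2 : Real.sqrt κ ^ 2 = κ := Real.sq_sqrt (le_of_lt hκ)
  -- bound LHS
  have hlogc : Real.log (c κ) ≤ c κ := by
    have := Real.log_le_sub_one_of_pos (lt_trans one_pos hc1)
    linarith
  have hlogc0 : 0 ≤ Real.log (c κ) := Real.log_nonneg (le_of_lt hc1)
  have hA : κ * Real.log (c κ) ≤ c κ := by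
    calc κ * Real.log (c κ) ≤ 1 * Real.log (c κ) := by
          apply mul_le_mul_of_nonneg_right (le_of_lt hκ1) hlogc0
      _ ≤ c κ := by linarith
  have huub : (c κ - Real.sqrt κ) ^ 2 + 1 ≤ (c κ) ^ 2 + 1 := by nlinarith
  have hub2 : Real.log ((c κ - Real.sqrt κ) ^ 2 + 1) ≤ 2 * c κ := by
    have h1 := log_le_two_sqrt (y := (c κ - Real.sqrt κ) ^ 2 + 1) (by positivity)
    have h2 : Real.sqrt ((c κ - Real.sqrt κ) ^ 2 + 1) ≤ c κ + 1 := by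
      rw [show c κ + 1 = Real.sqrt ((c κ + 1) ^ 2) from
        (Real.sqrt_sq (by linarith)).symm]
      apply Real.sqrt_le_sqrt
      nlinarith
    linarith
  -- bound RHS below
  have hC : -(Real.sqrt κ) ≤ κ / 2 * Real.log κ := by
    have := kappa_log_bound hκ (le_of_lt hκ1)
    linarith
  nlinarith
end cfacts

section cfacts2
variable {c : ℝ → ℝ}
  (hck : ∀ κ : ℝ, 0 < κ → Real.sqrt (1 + κ) < c κ ∧
      (c κ) ^ κ * ((c κ - Real.sqrt κ) ^ 2 + 1)
        = Real.exp (((c κ) ^ 2 - κ) / 2) * κ ^ (κ / 2))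

include hck

lemma KR_neg {κ : ℝ} (hκ : 0 < κ) (hκ0 : κ < 1/4225) :
    Ffun ((c κ) ^ 2) (κ + 1) (c κ / Real.sqrt κ) < 0 := by
  have hs0 : 0 < Real.sqrt κ := Real.sqrt_pos.2 hκ
  have hc1 : 1 < c κ := c_gt_one hck hκ
  have hc0 : (0:ℝ) < c κ := lt_trans one_pos hc1
  have hκ1 : κ < 1 := by linarith [hκ0]; 
  have hc8 : c κ < 8 := c_lt_eight hck hκ (by linarith)
  have hb0 : (c κ)^2 ≠ 0 := by positivity
  have hR2 : (c κ / Real.sqrt κ) ^ 2 = (c κ)^2 / κ := by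
    rw [div_pow, Real.sq_sqrt (le_of_lt hκ)]
  have h1R : 1 / (c κ / Real.sqrt κ) ^ 2 = κ / (c κ)^2 := by
    rw [hR2, one_div_div]
  have hlogR : Real.log (c κ / Real.sqrt κ) = Real.log (c κ) - Real.log κ / 2 := by
    rw [Real.log_div (ne_of_gt hc0) (ne_of_gt hs0), Real.log_sqrt (le_of_lt hκ)]
  have hval : Ffun ((c κ)^2) (κ+1) (c κ / Real.sqrt κ)
      = Real.log ((c κ - Real.sqrt κ) ^ 2 + 1) - Real.log (c κ) + Real.log κ / 2 := by
    have h2 : Ffun ((c κ)^2) (κ+1) (c κ / Real.sqrt κ)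
        = ((c κ)^2 - κ)/2 - (κ+1) * (Real.log (c κ) - Real.log κ / 2) := by
      unfold Ffun
      rw [h1R, hlogR]
      field_simp
    rw [h2]
    linear_combination -(c_log_eq hck hκ)
  rw [hval]
  -- now show log u + log κ / 2 < log c
  set u := (c κ - Real.sqrt κ) ^ 2 + 1 with hu
  have hu1 : (1:ℝ) ≤ u := by nlinarith [sq_nonneg (c κ - Real.sqrt κ)]
  have hsκ1 : Real.sqrt κ ≤ 1 := by
    have h3 : Real.sqrt κ ≤ Real.sqrt 1 := Real.sqrt_le_sqrt (by linarith)
    rwa [Real.sqrt_one] at h3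
  have hu65 : u ≤ 65 := by
    have h4 : 0 ≤ c κ - Real.sqrt κ := by linarith
    nlinarith
  have hsq65 : Real.sqrt κ < 1/65 := by
    rw [Real.sqrt_lt' (by norm_num)]
    norm_num
    linarith
  have husk : u * Real.sqrt κ < c κ := by nlinarith
  have hlog2 : Real.log (u * Real.sqrt κ) < Real.log (c κ) :=
    Real.log_lt_log (by positivity) husk
  rw [Real.log_mul (by positivity) (ne_of_gt hs0), Real.log_sqrt (le_of_lt hκ)] at hlog2
  linarith

lemma spec_exists {κ : ℝ} (hc01 : 1 < c 0) (hc0eq : (c 0) ^ 2 + 1 = Real.exp ((c 0) ^ 2 / 2))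
    (h0 : 0 ≤ κ) (hκ0 : κ < 1/4225) :
    ∃ ρ : ℝ, (Real.sqrt ((c κ)^2/(κ+1)) < ρ ∧ ρ ≤ Real.exp 33) ∧
      (Ffun ((c κ)^2) (κ+1) ρ = 0 ∧ (0 < κ → ρ < c κ / Real.sqrt κ)) := by
  rcases h0.eq_or_lt with h | hκ
  · subst h
    obtain ⟨r, hr1, hr2, hr3⟩ := Ffun_root (b := (c 0)^2) (l := 1) le_rfl
      (by nlinarith [c0_sq_gt_two hc01 hc0eq])
      (by nlinarith [c0_lt_five hc01 hc0eq, lt_trans one_pos hc01])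
    refine ⟨r, ⟨by simpa using hr1, hr2⟩, by simpa using hr3, by intro h; exact absurd h (lt_irrefl 0)⟩
  · have hc8 : c κ < 8 := c_lt_eight hck hκ (by linarith)
    have hc1 : 1 < c κ := c_gt_one hck hκ
    obtain ⟨r, hr1, hr2, hr3⟩ := Ffun_root (b := (c κ)^2) (l := κ + 1)
      (by linarith) (by nlinarith [c_sq_gt hck hκ]) (by nlinarith)
    refine ⟨r, ⟨hr1, hr2⟩, hr3, ?_⟩
    intro _
    -- r < c κ / √κ
    by_contra hcon
    push_neg at hcon
    have hRneg := KR_neg hck hκ hκ0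
    have hR1 : (1:ℝ) ≤ c κ / Real.sqrt κ := by
      rw [le_div_iff₀ (Real.sqrt_pos.2 hκ)]
      have h3 : Real.sqrt κ ≤ Real.sqrt 1 := Real.sqrt_le_sqrt (by linarith)
      rw [Real.sqrt_one] at h3
      linarith
    have := Ffun_nonneg (by linarith : (0:ℝ) < κ + 1)
      (by nlinarith [c_sq_gt hck hκ] : κ + 1 < (c κ)^2) hr1 hr3
      (c κ / Real.sqrt κ) hR1 hcon
    linarith

end cfacts2

section cfacts3
variable {c : ℝ → ℝ}
  (hck : ∀ κ : ℝ, 0 < κ → Real.sqrt (1 + κ) < c κ ∧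
      (c κ) ^ κ * ((c κ - Real.sqrt κ) ^ 2 + 1)
        = Real.exp (((c κ) ^ 2 - κ) / 2) * κ ^ (κ / 2))

include hck

lemma Phi0_small {κ : ℝ} (hκ : 0 < κ) (hκ1 : κ < 1) :
    |Phi0 (c κ)| ≤ 26 * Real.sqrt κ := by
  have heq := c_log_eq hck hκ
  have hc1 : 1 < c κ := c_gt_one hck hκ
  have hc8 : c κ < 8 := c_lt_eight hck hκ hκ1
  have hs0 : 0 < Real.sqrt κ := Real.sqrt_pos.2 hκ
  have hsκ1 : Real.sqrt κ ≤ 1 := by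
    have h3 : Real.sqrt κ ≤ Real.sqrt 1 := Real.sqrt_le_sqrt (le_of_lt hκ1)
    rwa [Real.sqrt_one] at h3
  have hs2 : Real.sqrt κ ^ 2 = κ := Real.sq_sqrt (le_of_lt hκ)
  have hκs : κ ≤ Real.sqrt κ := by nlinarith
  set u := (c κ - Real.sqrt κ) ^ 2 + 1 with hu
  have hu1 : (1:ℝ) ≤ u := by nlinarith [sq_nonneg (c κ - Real.sqrt κ)]
  -- A := log (c²+1) - log u,  |A| ≤ 17 √κ
  have hA : |Real.log ((c κ)^2 + 1) - Real.log u| ≤ 17 * Real.sqrt κ := by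
    have h1 := abs_log_sub_le (x := (c κ)^2 + 1) (y := u) (by nlinarith) hu1
    have h2 : |(c κ)^2 + 1 - u| ≤ 17 * Real.sqrt κ := by
      rw [abs_le]
      constructor <;> nlinarith
    linarith
  have hAl := abs_le.1 hA
  -- B := κ/2 log κ ∈ [-√κ, 0]
  have hB1 : -(Real.sqrt κ) ≤ κ / 2 * Real.log κ := by
    linarith [kappa_log_bound hκ (le_of_lt hκ1)]
  have hB2 : κ / 2 * Real.log κ ≤ 0 := by
    have := Real.log_nonpos (le_of_lt hκ) (le_of_lt hκ1)
    nlinarith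
  -- D := κ log c ∈ [0, 7√κ]
  have hlogc0 : 0 ≤ Real.log (c κ) := Real.log_nonneg (le_of_lt hc1)
  have hlogc : Real.log (c κ) ≤ 7 := by
    have := Real.log_le_sub_one_of_pos (lt_trans one_pos hc1)
    linarith
  have hD1 : 0 ≤ κ * Real.log (c κ) := by positivity
  have hD2 : κ * Real.log (c κ) ≤ 7 * Real.sqrt κ := by nlinarith
  -- Phi0 (c κ) = A + B - κ/2 - D
  have hPhi : Phi0 (c κ) = (Real.log ((c κ)^2 + 1) - Real.log u)
      + κ / 2 * Real.log κ - κ / 2 - κ * Real.log (c κ) := by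
    unfold Phi0
    linear_combination heq
  rw [hPhi, abs_le]
  constructor <;> nlinarith

lemma c_close (hc01 : 1 < c 0) (hc0eq : (c 0) ^ 2 + 1 = Real.exp ((c 0) ^ 2 / 2)) :
    ∀ ε : ℝ, 0 < ε → ∃ κ₁ : ℝ, (0 < κ₁ ∧ κ₁ ≤ 1/4225) ∧
      ∀ κ : ℝ, 0 < κ → κ < κ₁ → |c κ - c 0| < ε := by
  intro ε hε
  have hc05 : c 0 < 5 := c0_lt_five hc01 hc0eq
  set ε' := min ε ((c 0 - 1)/2) with hε'def
  have hε'0 : 0 < ε' := lt_min hε (by linarith)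
  have hε'le : ε' ≤ (c 0 - 1)/2 := min_le_right _ _
  have hp1 : 1 < c 0 - ε' := by linarith
  have hPhic0 : Phi0 (c 0) = 0 := by
    unfold Phi0
    rw [hc0eq, Real.log_exp]
    ring
  have hd1 : 0 < Phi0 (c 0 - ε') := by
    have := Phi0_anti (Set.mem_Ici.2 (le_of_lt hp1)) (Set.mem_Ici.2 (le_of_lt hc01))
      (by linarith : c 0 - ε' < c 0)
    rw [hPhic0] at this
    linarith
  have hd2 : Phi0 (c 0 + ε') < 0 := by
    have := Phi0_anti (Set.mem_Ici.2 (le_of_lt hc01)) (Set.mem_Ici.2 (by linarith : (1:ℝ) ≤ c 0 + ε'))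
      (by linarith : c 0 < c 0 + ε')
    rw [hPhic0] at this
    linarith
  set d1 := Phi0 (c 0 - ε') with hd1def
  set d2 := -Phi0 (c 0 + ε') with hd2def
  have hd2' : 0 < d2 := by simp [hd2def]; linarith
  refine ⟨min (1/4225) (min ((d1/26)^2) ((d2/26)^2)), ⟨by positivity, min_le_left _ _⟩, ?_⟩
  intro κ hκ hκlt
  have hκ4225 : κ < 1/4225 := lt_of_lt_of_le hκlt (min_le_left _ _)
  have hκd1 : κ < (d1/26)^2 := lt_of_lt_of_le hκlt (le_trans (min_le_right _ _) (min_le_left _ _))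
  have hκd2 : κ < (d2/26)^2 := lt_of_lt_of_le hκlt (le_trans (min_le_right _ _) (min_le_right _ _))
  have hsd1 : Real.sqrt κ < d1/26 := by
    rw [Real.sqrt_lt' (by positivity)]
    exact hκd1
  have hsd2 : Real.sqrt κ < d2/26 := by
    rw [Real.sqrt_lt' (by positivity)]
    exact hκd2
  have hPsmall := Phi0_small hck hκ (by linarith)
  have hc1 : 1 < c κ := c_gt_one hck hκ
  have hlt1 : c 0 - ε' < c κ := by
    by_contra hcon
    push_neg at hcon
    have := (Phi0_anti.antitoneOn) (Set.mem_Ici.2 (le_of_lt hc1)) (Set.mem_Ici.2 (le_of_lt hp1)) hcon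
    have h2 : d1 ≤ |Phi0 (c κ)| := le_trans (by rw [hd1def]; exact this) (le_abs_self _)
    nlinarith
  have hlt2 : c κ < c 0 + ε' := by
    by_contra hcon
    push_neg at hcon
    have := (Phi0_anti.antitoneOn) (Set.mem_Ici.2 (by linarith : (1:ℝ) ≤ c 0 + ε')) (Set.mem_Ici.2 (le_of_lt hc1)) hcon
    have h2 : Phi0 (c κ) ≤ -d2 := by rw [hd2def] at *; linarith
    have h3 : d2 ≤ |Phi0 (c κ)| := by
      rw [abs_le'] at hPsmall
      have := neg_abs_le (Phi0 (c κ))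
      nlinarith [abs_nonneg (Phi0 (c κ)), le_abs_self (Phi0 (c κ)), neg_le_abs (Phi0 (c κ))]
    nlinarith
  have : |c κ - c 0| < ε' := abs_lt.2 ⟨by linarith, by linarith⟩
  exact lt_of_lt_of_le this (min_le_left _ _)

end cfacts3

set_option maxHeartbeats 1000000 in
/-- sign structure of `e^φ − G_κ(φ)` and a linear lower bound.
Here `c κ = c_κ` for `κ > 0`, `c 0 = c₀`, and `G κ` is the inverse of the restriction
of `H_κ` to `[1, c_κ/√κ]` (to `[1, ∞)` when `κ = 0`). -/
theorem stmt19 (c : ℝ → ℝ)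
    (hc0 : 1 < c 0 ∧ (c 0) ^ 2 + 1 = Real.exp ((c 0) ^ 2 / 2))
    (hck : ∀ κ : ℝ, 0 < κ → Real.sqrt (1 + κ) < c κ ∧
      (c κ) ^ κ * ((c κ - Real.sqrt κ) ^ 2 + 1)
        = Real.exp (((c κ) ^ 2 - κ) / 2) * κ ^ (κ / 2))
    (G : ℝ → ℝ → ℝ)
    (hG0 : ∀ ρ : ℝ, 1 ≤ ρ → G 0 (Hfun 0 (c 0) ρ) = ρ)
    (hGk : ∀ κ : ℝ, 0 < κ → ∀ ρ : ℝ, 1 ≤ ρ → ρ ≤ c κ / Real.sqrt κ →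
      G κ (Hfun κ (c κ) ρ) = ρ) :
    ∃ κ₀ > (0:ℝ), ∃ a : ℝ → ℝ,
      (∀ κ : ℝ, 0 ≤ κ → κ < κ₀ →
        0 < a κ ∧ a κ < phiStar κ (c κ) ∧
        (∀ x ∈ Gdom κ (c κ), x ≤ a κ → 0 ≤ Real.exp x - G κ x) ∧
        (∀ x ∈ Gdom κ (c κ), a κ ≤ x → Real.exp x - G κ x ≤ 0)) ∧
      Tendsto a (𝓝[>] (0:ℝ)) (𝓝 (a 0)) ∧
      (∀ δ : ℝ, 0 < δ → ∃ cδ > (0:ℝ), ∃ κδ : ℝ, 0 < κδ ∧ κδ < κ₀ ∧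
        ∀ κ : ℝ, 0 ≤ κ → κ < κδ → ∀ x ∈ Gdom κ (c κ), x ≤ a κ - δ →
          cδ * x ≤ Real.exp x - G κ x) := by
  obtain ⟨hc01, hc0eq⟩ := hc0
  -- the selection function for the root ρ_a(κ) of K_κ
  have hspecex : ∀ κ : ℝ, 0 ≤ κ → κ < 1/4225 →
      ∃ ρ : ℝ, (Real.sqrt ((c κ)^2/(κ+1)) < ρ ∧ ρ ≤ Real.exp 33) ∧
        (Ffun ((c κ)^2) (κ+1) ρ = 0 ∧ (0 < κ → ρ < c κ / Real.sqrt κ)) :=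
    fun κ h0 h1 => spec_exists hck hc01 hc0eq h0 h1
  choose! ρsel hsel using hspecex
  have hsel1 : ∀ κ : ℝ, 0 ≤ κ → κ < 1/4225 → Real.sqrt ((c κ)^2/(κ+1)) < ρsel κ :=
    fun κ h0 h1 => (hsel κ h0 h1).1.1
  have hsel2 : ∀ κ : ℝ, 0 ≤ κ → κ < 1/4225 → ρsel κ ≤ Real.exp 33 :=
    fun κ h0 h1 => (hsel κ h0 h1).1.2
  have hsel3 : ∀ κ : ℝ, 0 ≤ κ → κ < 1/4225 → Ffun ((c κ)^2) (κ+1) (ρsel κ) = 0 :=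
    fun κ h0 h1 => (hsel κ h0 h1).2.1
  have hsel4 : ∀ κ : ℝ, 0 ≤ κ → κ < 1/4225 → 0 < κ → ρsel κ < c κ / Real.sqrt κ :=
    fun κ h0 h1 => (hsel κ h0 h1).2.2
  -- basic facts
  have Kid : ∀ b k x : ℝ, Ffun b (k+1) x = Ffun b k x - Real.log x := by
    intro b k x; unfold Ffun; ring
  have hksq : ∀ κ : ℝ, 0 ≤ κ → κ + 1 < (c κ)^2 := by
    intro κ h0
    rcases h0.eq_or_lt with h | h
    · rw [← h]; linarith [c0_sq_gt_two hc01 hc0eq]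
    · linarith [c_sq_gt hck h]
  have hcpos : ∀ κ : ℝ, 0 ≤ κ → 0 < c κ := by
    intro κ h0
    rcases h0.eq_or_lt with h | h
    · rw [← h]; linarith
    · linarith [c_gt_one hck h]
  have hρ1 : ∀ κ : ℝ, 0 ≤ κ → κ < 1/4225 → 1 < ρsel κ := by
    intro κ h0 hκ
    have h2 : (1:ℝ) ≤ (c κ)^2/(κ+1) := by
      rw [le_div_iff₀ (by linarith : (0:ℝ) < κ + 1)]
      linarith [hksq κ h0]
    have h3 : Real.sqrt 1 ≤ Real.sqrt ((c κ)^2/(κ+1)) := Real.sqrt_le_sqrt h2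
    rw [Real.sqrt_one] at h3
    exact lt_of_le_of_lt h3 (hsel1 κ h0 hκ)
  have hρpos : ∀ κ : ℝ, 0 ≤ κ → κ < 1/4225 → 0 < ρsel κ :=
    fun κ h0 hκ => lt_trans one_pos (hρ1 κ h0 hκ)
  have hHρa : ∀ κ : ℝ, 0 ≤ κ → κ < 1/4225 →
      Ffun ((c κ)^2) κ (ρsel κ) = Real.log (ρsel κ) := by
    intro κ h0 hκ
    have := hsel3 κ h0 hκ
    rw [Kid] at this
    linarith
  -- R bounds for κ > 0
  have hR1 : ∀ κ : ℝ, 0 < κ → 1 ≤ c κ / Real.sqrt κ := by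
    intro κ hκ
    rw [le_div_iff₀ (Real.sqrt_pos.2 hκ)]
    have h1 : Real.sqrt κ < Real.sqrt (1 + κ) := Real.sqrt_lt_sqrt (le_of_lt hκ) (by linarith)
    linarith [(hck κ hκ).1]
  have hRsq : ∀ κ : ℝ, 0 < κ → κ * (c κ / Real.sqrt κ)^2 ≤ (c κ)^2 := by
    intro κ hκ
    rw [div_pow, Real.sq_sqrt (le_of_lt hκ)]
    rw [mul_comm, div_mul_cancel₀ _ (ne_of_gt hκ)]
  -- representation of points of Gdom
  have hrep : ∀ κ : ℝ, 0 ≤ κ → κ < 1/4225 → ∀ x ∈ Gdom κ (c κ),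
      ∃ ρ : ℝ, (1 ≤ ρ ∧ Ffun ((c κ)^2) κ ρ = x ∧ G κ x = ρ) ∧
        (0 < κ → ρ ≤ c κ / Real.sqrt κ) := by
    intro κ h0 hκ x hx
    rcases h0.eq_or_lt with h | hκpos
    · -- κ = 0
      subst h
      rw [Gdom, if_pos rfl] at hx
      obtain ⟨hx0, hxlt⟩ := hx
      set b := (c 0)^2 with hbdef
      have hb0 : (0:ℝ) < b := by positivity
      have hd : (0:ℝ) < b - 2*x := by linarith
      set ρ := Real.sqrt (b/(b-2*x)) with hρdef
      have harg1 : (1:ℝ) ≤ b/(b-2*x) := by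
        rw [le_div_iff₀ hd]
        linarith
      have h1ρ : (1:ℝ) ≤ ρ := by
        have h3 : Real.sqrt 1 ≤ Real.sqrt (b/(b-2*x)) := Real.sqrt_le_sqrt harg1
        rwa [Real.sqrt_one] at h3
      have hρ2 : ρ^2 = b/(b-2*x) := Real.sq_sqrt (by positivity)
      have hFx : Ffun b 0 ρ = x := by
        simp only [Ffun]
        rw [hρ2, one_div_div]
        field_simp
        ring
      refine ⟨ρ, ⟨h1ρ, hFx, ?_⟩, fun h => absurd h (lt_irrefl 0)⟩
      have := hG0 ρ h1ρ
      rw [show Hfun 0 (c 0) ρ = Ffun ((c 0)^2) 0 ρ from rfl, hFx] at this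
      exact this.symm ▸ rfl
    · -- κ > 0
      rw [Gdom, if_neg (ne_of_gt hκpos)] at hx
      have hphis : phiStar κ (c κ) = Ffun ((c κ)^2) κ (c κ / Real.sqrt κ) := by
        rw [phiStar, if_neg (ne_of_gt hκpos)]
        rfl
      have hxm : x ∈ Icc (Ffun ((c κ)^2) κ 1) (Ffun ((c κ)^2) κ (c κ / Real.sqrt κ)) := by
        rw [Ffun_one]
        exact ⟨hx.1, by rw [← hphis]; exact hx.2⟩
      obtain ⟨ρ, hρmem, hFρ⟩ := intermediate_value_Icc (hR1 κ hκpos)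
        (Ffun_contOn _ _ (fun y hy => lt_of_lt_of_le one_pos hy.1)) hxm
      refine ⟨ρ, ⟨hρmem.1, hFρ, ?_⟩, fun _ => hρmem.2⟩
      have := hGk κ hκpos ρ hρmem.1 hρmem.2
      rw [show Hfun κ (c κ) ρ = Ffun ((c κ)^2) κ ρ from rfl, hFρ] at this
      exact this.symm ▸ rfl
  -- comparison with ρsel via monotonicity of H
  have hcomp : ∀ κ : ℝ, 0 ≤ κ → κ < 1/4225 → ∀ ρ : ℝ, 1 ≤ ρ →
      (0 < κ → ρ ≤ c κ / Real.sqrt κ) → ∀ hc2 : Ffun ((c κ)^2) κ ρ ≤ Real.log (ρsel κ),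
      ρ ≤ ρsel κ := by
    intro κ h0 hκ ρ h1ρ hρR hle
    by_contra hcon
    push_neg at hcon
    have hlt : Real.log (ρsel κ) < Ffun ((c κ)^2) κ ρ := by
      rw [← hHρa κ h0 hκ]
      rcases h0.eq_or_lt with h | hκpos
      · -- κ = 0, monotone on [1, ρ]
        have hm := Ffun_mono (b := (c κ)^2) (l := κ) (s := ρ)
          (pow_pos (hcpos κ h0) 2) h0 h1ρ (by rw [← h]; simpa using sq_nonneg (c 0))
        exact hm ⟨le_of_lt (hρ1 κ h0 hκ), le_of_lt hcon⟩ ⟨h1ρ, le_rfl⟩ hcon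
      · have hm := Ffun_mono (b := (c κ)^2) (l := κ) (s := c κ / Real.sqrt κ)
          (pow_pos (hcpos κ h0) 2) h0 (hR1 κ hκpos) (hRsq κ hκpos)
        exact hm ⟨le_of_lt (hρ1 κ h0 hκ), le_of_lt (hsel4 κ h0 hκ hκpos)⟩
          ⟨h1ρ, hρR hκpos⟩ hcon
    linarith
  have hcomp' : ∀ κ : ℝ, 0 ≤ κ → κ < 1/4225 → ∀ ρ : ℝ, 1 ≤ ρ →
      (0 < κ → ρ ≤ c κ / Real.sqrt κ) → ∀ hc2 : Real.log (ρsel κ) ≤ Ffun ((c κ)^2) κ ρ,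
      ρsel κ ≤ ρ := by
    intro κ h0 hκ ρ h1ρ hρR hle
    by_contra hcon
    push_neg at hcon
    have hlt : Ffun ((c κ)^2) κ ρ < Real.log (ρsel κ) := by
      rw [← hHρa κ h0 hκ]
      rcases h0.eq_or_lt with h | hκpos
      · have hm := Ffun_mono (b := (c κ)^2) (l := κ) (s := ρsel κ)
          (pow_pos (hcpos κ h0) 2) h0 (le_of_lt (hρ1 κ h0 hκ)) (by rw [← h]; simpa using sq_nonneg (c 0))
        exact hm ⟨h1ρ, le_of_lt hcon⟩ ⟨le_of_lt (hρ1 κ h0 hκ), le_rfl⟩ hcon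
      · have hm := Ffun_mono (b := (c κ)^2) (l := κ) (s := c κ / Real.sqrt κ)
          (pow_pos (hcpos κ h0) 2) h0 (hR1 κ hκpos) (hRsq κ hκpos)
        exact hm ⟨h1ρ, le_trans (le_of_lt hcon) (le_of_lt (hsel4 κ h0 hκ hκpos))⟩
          ⟨le_of_lt (hρ1 κ h0 hκ), le_of_lt (hsel4 κ h0 hκ hκpos)⟩ hcon
    linarith
  -- sign structure
  have hsign1 : ∀ κ : ℝ, 0 ≤ κ → κ < 1/4225 → ∀ x ∈ Gdom κ (c κ),
      x ≤ Real.log (ρsel κ) → 0 ≤ Real.exp x - G κ x := by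
    intro κ h0 hκ x hx hxa
    obtain ⟨ρ, ⟨h1ρ, hFx, hGx⟩, hρR⟩ := hrep κ h0 hκ x hx
    have hρle : ρ ≤ ρsel κ := hcomp κ h0 hκ ρ h1ρ hρR (by rw [hFx]; exact hxa)
    have hK := Ffun_nonneg (by linarith : (0:ℝ) < κ+1)
      (by linarith [hksq κ h0] : κ+1 < (c κ)^2) (hsel1 κ h0 hκ) (hsel3 κ h0 hκ) ρ h1ρ hρle
    rw [Kid, hFx] at hK
    have hexp : ρ ≤ Real.exp x := by
      calc ρ = Real.exp (Real.log ρ) := (Real.exp_log (by linarith)).symm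
        _ ≤ Real.exp x := Real.exp_le_exp.2 (by linarith)
    rw [hGx]; linarith
  have hsign2 : ∀ κ : ℝ, 0 ≤ κ → κ < 1/4225 → ∀ x ∈ Gdom κ (c κ),
      Real.log (ρsel κ) ≤ x → Real.exp x - G κ x ≤ 0 := by
    intro κ h0 hκ x hx hxa
    obtain ⟨ρ, ⟨h1ρ, hFx, hGx⟩, hρR⟩ := hrep κ h0 hκ x hx
    have hρge : ρsel κ ≤ ρ := hcomp' κ h0 hκ ρ h1ρ hρR (by rw [hFx]; exact hxa)
    have hK := Ffun_nonpos (by linarith : (0:ℝ) < κ+1)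
      (by linarith [hksq κ h0] : κ+1 < (c κ)^2) (hsel1 κ h0 hκ) (hsel3 κ h0 hκ) ρ hρge
    rw [Kid, hFx] at hK
    have hexp : Real.exp x ≤ ρ := by
      calc Real.exp x ≤ Real.exp (Real.log ρ) := Real.exp_le_exp.2 (by linarith)
        _ = ρ := Real.exp_log (by linarith)
    rw [hGx]; linarith
  -- a κ < phiStar
  have haφ : ∀ κ : ℝ, 0 ≤ κ → κ < 1/4225 → Real.log (ρsel κ) < phiStar κ (c κ) := by
    intro κ h0 hκ
    rcases h0.eq_or_lt with h | hκpos
    · rw [← h]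
      rw [phiStar, if_pos rfl]
      rw [← hHρa 0 le_rfl (by norm_num)]
      simp only [Ffun]
      have h1 : 0 < 1/(ρsel 0)^2 := by
        have := hρpos 0 le_rfl (by norm_num)
        positivity
      have h2 : 0 < (c 0)^2 * (1/(ρsel 0)^2) :=
        mul_pos (pow_pos (hcpos 0 le_rfl) 2) h1
      linarith only [h2]
    · rw [phiStar, if_neg (ne_of_gt hκpos),
        show Hfun κ (c κ) (c κ / Real.sqrt κ) = Ffun ((c κ)^2) κ (c κ / Real.sqrt κ) from rfl,
        ← hHρa κ h0 hκ]
      exact Ffun_mono (pow_pos (hcpos κ h0) 2) h0 (hR1 κ hκpos) (hRsq κ hκpos)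
        ⟨le_of_lt (hρ1 κ h0 hκ), le_of_lt (hsel4 κ h0 hκ hκpos)⟩
        ⟨hR1 κ hκpos, le_rfl⟩ (hsel4 κ h0 hκ hκpos)
  -- facts at κ = 0
  have hc_cl := c_close hck hc01 hc0eq
  have hρ0fact : c 0 < ρsel 0 := by
    have h1 := hsel1 0 le_rfl (by norm_num)
    rwa [show (0:ℝ)+1 = 1 by norm_num, div_one,
      Real.sqrt_sq (le_of_lt (hcpos 0 le_rfl))] at h1
  have hK0 : Ffun ((c 0)^2) 1 (ρsel 0) = 0 := by
    have h1 := hsel3 0 le_rfl (by norm_num)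
    rwa [show (0:ℝ)+1 = 1 by norm_num] at h1
  have hK0root : Real.sqrt ((c 0)^2 / 1) < ρsel 0 := by
    rwa [div_one, Real.sqrt_sq (le_of_lt (hcpos 0 le_rfl))]
  have h1b0 : (1:ℝ) < (c 0)^2 := by linarith only [c0_sq_gt_two hc01 hc0eq]
  have hR0e : ρsel 0 ≤ Real.exp 33 := hsel2 0 le_rfl (by norm_num)
  have hc05 : c 0 < 5 := c0_lt_five hc01 hc0eq
  -- uniform difference bound
  have hdiffF : ∀ κ : ℝ, 0 ≤ κ → ∀ εc : ℝ, 0 < εc → |c κ - c 0| ≤ εc → c κ < 8 →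
      ∀ p : ℝ, 1 ≤ p → p ≤ Real.exp 33 + 1 →
      |Ffun ((c κ)^2) (κ+1) p - Ffun ((c 0)^2) 1 p| ≤ 13/2 * εc + 34 * κ := by
    intro κ h0 εc hεc hcc hc8 p h1p hpe
    have hp0 : (0:ℝ) < p := lt_of_lt_of_le one_pos h1p
    have hdiffeq : Ffun ((c κ)^2) (κ+1) p - Ffun ((c 0)^2) 1 p
        = ((c κ)^2 - (c 0)^2)/2 * (1 - 1/p^2) - κ * Real.log p := by
      unfold Ffun; ring
    have hB0 : 0 ≤ 1 - 1/p^2 := by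
      have : 1/p^2 ≤ 1 := by
        rw [div_le_one (by positivity)]
        linarith only [sq_nonneg (p - 1), h1p]
      linarith only [this]
    have hB1 : 1 - 1/p^2 ≤ 1 := by
      have : 0 ≤ 1/p^2 := by positivity
      linarith
    have hlogp0 : 0 ≤ Real.log p := Real.log_nonneg h1p
    have hlogp34 : Real.log p ≤ 34 := by
      have h1 : Real.log p ≤ Real.log (Real.exp 33 + 1) :=
        Real.log_le_log hp0 hpe
      have h2 : Real.exp 33 + 1 ≤ Real.exp 34 := by
        have h3 : Real.exp 34 = Real.exp 33 * Real.exp 1 := by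
          rw [← Real.exp_add]; norm_num
        have h4 : (2:ℝ) ≤ Real.exp 1 := by linarith only [Real.add_one_le_exp (1:ℝ)]
        have h5 : (1:ℝ) ≤ Real.exp 33 := Real.one_le_exp (by norm_num)
        have h6 : Real.exp 33 * 2 ≤ Real.exp 33 * Real.exp 1 :=
          mul_le_mul_of_nonneg_left h4 (by positivity)
        linarith only [h3, h5, h6]
      have h4 : Real.log (Real.exp 33 + 1) ≤ 34 := by
        calc Real.log (Real.exp 33 + 1) ≤ Real.log (Real.exp 34) :=
              Real.log_le_log (by positivity) h2
          _ = 34 := Real.log_exp 34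
      linarith
    have habs : |(c κ)^2 - (c 0)^2| ≤ 13 * εc := by
      have he : (c κ)^2 - (c 0)^2 = (c κ - c 0) * (c κ + c 0) := by ring
      rw [he, abs_mul]
      have h1 : |c κ + c 0| ≤ 13 := by
        rw [abs_le]
        constructor
        · linarith only [hcpos κ h0, hcpos 0 le_rfl]
        · linarith only [hc8, hc05]
      calc |c κ - c 0| * |c κ + c 0| ≤ εc * 13 := by
            apply mul_le_mul hcc h1 (abs_nonneg _) (le_of_lt hεc)
        _ = 13 * εc := by ring
    have h2s := abs_le.1 habs
    have hub : ((c κ)^2 - (c 0)^2) * (1 - 1/p^2) ≤ 13 * εc := by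
      calc ((c κ)^2 - (c 0)^2) * (1 - 1/p^2) ≤ (13 * εc) * (1 - 1/p^2) :=
            mul_le_mul_of_nonneg_right h2s.2 hB0
        _ ≤ 13 * εc := mul_le_of_le_one_right (by positivity) hB1
    have hlb : -(13 * εc) ≤ ((c κ)^2 - (c 0)^2) * (1 - 1/p^2) := by
      calc -(13 * εc) ≤ (-(13 * εc)) * (1 - 1/p^2) := by
            rw [neg_mul]
            exact neg_le_neg (mul_le_of_le_one_right (by positivity) hB1)
        _ ≤ ((c κ)^2 - (c 0)^2) * (1 - 1/p^2) :=
            mul_le_mul_of_nonneg_right h2s.1 hB0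
    have hκL1 : 0 ≤ κ * Real.log p := mul_nonneg h0 hlogp0
    have hκL2 : κ * Real.log p ≤ 34 * κ := by
      have := mul_le_mul_of_nonneg_left hlogp34 h0
      linarith only [this]
    rw [hdiffeq, abs_le]
    constructor <;> linarith only [hub, hlb, hκL1, hκL2]
  -- closeness of the root selector
  have hρ_close : ∀ ε : ℝ, 0 < ε → ∃ κ₂ : ℝ, (0 < κ₂ ∧ κ₂ ≤ 1/4225) ∧
      ∀ κ : ℝ, 0 < κ → κ < κ₂ → |ρsel κ - ρsel 0| < ε := by
    intro ε hε
    set R0 := ρsel 0 with hR0def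
    set ε' := min ε (min ((R0 - c 0)/2) 1) with hε'def
    have hε'0 : 0 < ε' := by
      apply lt_min hε
      apply lt_min _ one_pos
      linarith
    have hε'a : ε' ≤ (R0 - c 0)/2 := le_trans (min_le_right _ _) (min_le_left _ _)
    have hε'b : ε' ≤ 1 := le_trans (min_le_right _ _) (min_le_right _ _)
    have hp1c : c 0 < R0 - ε' := by linarith
    have hp11 : 1 < R0 - ε' := by linarith
    have hd1 : 0 < Ffun ((c 0)^2) 1 (R0 - ε') :=
      Ffun_pos one_pos h1b0 hK0root hK0 (R0 - ε') hp11 (by linarith)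
    have hd2 : Ffun ((c 0)^2) 1 (R0 + ε') < 0 :=
      Ffun_neg one_pos h1b0 hK0root hK0 (R0 + ε') (by linarith)
    set d1 := Ffun ((c 0)^2) 1 (R0 - ε') with hd1def
    set d2 := -Ffun ((c 0)^2) 1 (R0 + ε') with hd2def
    have hd2' : 0 < d2 := by rw [hd2def]; linarith
    set D := min d1 d2 with hDdef
    have hD0 : 0 < D := lt_min hd1 hd2'
    have hDd1 : D ≤ d1 := min_le_left _ _
    have hDd2 : D ≤ d2 := min_le_right _ _
    obtain ⟨κ₁, ⟨hκ₁0, hκ₁le⟩, hκ₁c⟩ := hc_cl (D/13) (by positivity)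
    clear_value D d1 d2
    refine ⟨min κ₁ (D/136), ⟨lt_min hκ₁0 (by positivity), le_trans (min_le_left _ _) hκ₁le⟩, ?_⟩
    intro κ hκ0 hκlt
    have hκκ₁ : κ < κ₁ := lt_of_lt_of_le hκlt (min_le_left _ _)
    have hκD : κ < D/136 := lt_of_lt_of_le hκlt (min_le_right _ _)
    have hκ4225 : κ < 1/4225 := lt_of_lt_of_le hκκ₁ hκ₁le
    have hcc := hκ₁c κ hκ0 hκκ₁
    have hc8 : c κ < 8 := c_lt_eight hck hκ0 (by linarith)
    have h0κ : (0:ℝ) ≤ κ := le_of_lt hκ0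
    have hksqκ : κ + 1 < (c κ)^2 := hksq κ h0κ
    have hgt : R0 - ε' < ρsel κ := by
      by_contra hcon
      push_neg at hcon
      have h1 := Ffun_nonpos (by linarith : (0:ℝ) < κ+1) hksqκ
        (hsel1 κ h0κ hκ4225) (hsel3 κ h0κ hκ4225) (R0 - ε') hcon
      have h2 := abs_le.1 (hdiffF κ h0κ (D/13) (by positivity) (le_of_lt hcc) hc8
        (R0 - ε') (le_of_lt hp11) (by linarith [hR0e]))
      rw [← hd1def] at h2
      linarith only [h1, h2.1, hDd1, hκD, hD0]
    have hlt : ρsel κ < R0 + ε' := by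
      by_contra hcon
      push_neg at hcon
      have h1 := Ffun_nonneg (by linarith : (0:ℝ) < κ+1) hksqκ
        (hsel1 κ h0κ hκ4225) (hsel3 κ h0κ hκ4225) (R0 + ε') (by linarith) hcon
      have h2 := abs_le.1 (hdiffF κ h0κ (D/13) (by positivity) (le_of_lt hcc) hc8
        (R0 + ε') (by linarith) (by linarith [hR0e]))
      have h4 : Ffun ((c 0)^2) 1 (R0 + ε') = -d2 := by rw [hd2def]; ring
      rw [h4] at h2
      linarith only [h1, h2.2, hDd2, hκD, hD0]
    have : |ρsel κ - R0| < ε' := abs_lt.2 ⟨by linarith, by linarith⟩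
    exact lt_of_lt_of_le this (min_le_left _ _)
  -- assemble
  refine ⟨1/4225, by norm_num, fun κ => Real.log (ρsel κ), ?_, ?_, ?_⟩
  · intro κ h0 hκ
    exact ⟨Real.log_pos (hρ1 κ h0 hκ), haφ κ h0 hκ, hsign1 κ h0 hκ, hsign2 κ h0 hκ⟩
  · -- Tendsto
    rw [Metric.tendsto_nhdsWithin_nhds]
    intro ε hε
    obtain ⟨κ₂, ⟨hκ₂0, hκ₂le⟩, hκ₂⟩ := hρ_close (ε/2) (by positivity)
    refine ⟨κ₂, hκ₂0, ?_⟩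
    intro κ hκmem hdist
    have hκ0 : 0 < κ := hκmem
    rw [Real.dist_eq, sub_zero, abs_of_pos hκ0] at hdist
    have h1 := hκ₂ κ hκ0 hdist
    have hκ4225 : κ < 1/4225 := lt_of_lt_of_le hdist hκ₂le
    rw [Real.dist_eq]
    have hlip := abs_log_sub_le (le_of_lt (hρ1 κ (le_of_lt hκ0) hκ4225))
      (le_of_lt (hρ1 0 le_rfl (by norm_num)))
    calc |Real.log (ρsel κ) - Real.log (ρsel 0)| ≤ |ρsel κ - ρsel 0| := hlip
      _ < ε/2 := h1
      _ < ε := by linarith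
  · -- linear lower bound
    intro δ hδ
    set R0 := ρsel 0 with hR0def
    set δ' := min δ (min (R0 - c 0) 1) with hδ'def
    have hδ'0 : 0 < δ' := by
      apply lt_min hδ
      apply lt_min _ one_pos
      linarith
    have hδ'δ : δ' ≤ δ := min_le_left _ _
    have hδ'a : δ' ≤ R0 - c 0 := le_trans (min_le_right _ _) (min_le_left _ _)
    have hδ'b : δ' ≤ 1 := le_trans (min_le_right _ _) (min_le_right _ _)
    set p := R0 - δ'/2 with hpdef
    have hpc : c 0 < p := by rw [hpdef]; linarith
    have hp1 : 1 < p := by linarith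
    have hpltR0 : p < R0 := by rw [hpdef]; linarith
    have hd : 0 < Ffun ((c 0)^2) 1 p := Ffun_pos one_pos h1b0 hK0root hK0 p hp1 hpltR0
    set d := Ffun ((c 0)^2) 1 p with hddef
    set m := min (1/4 : ℝ) (d/200) with hmdef
    have hm0 : 0 < m := lt_min (by norm_num) (by positivity)
    have hm14 : m ≤ 1/4 := min_le_left _ _
    have hmd : m ≤ d/200 := min_le_right _ _
    have hm1 : m < 1 := by linarith
    clear_value R0 δ' p d m
    obtain ⟨κ₁, ⟨hκ₁0, hκ₁le⟩, hκ₁c⟩ := hc_cl (min (1/20) (d/56)) (by positivity)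
    obtain ⟨κ₂, ⟨hκ₂0, hκ₂le⟩, hκ₂ρ⟩ := hρ_close (δ'/2) (by positivity)
    refine ⟨m, hm0, min (min κ₁ κ₂) (min (d/264) (1/8450)),
      ⟨by positivity, ?_, ?_⟩⟩
    · calc min (min κ₁ κ₂) (min (d/264) (1/8450)) ≤ min (d/264) (1/8450) := min_le_right _ _
        _ ≤ 1/8450 := min_le_right _ _
        _ < 1/4225 := by norm_num
    intro κ h0κ hκδ x hx hxa
    have hκκ₁ : κ < κ₁ := lt_of_lt_of_le hκδ (le_trans (min_le_left _ _) (min_le_left _ _))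
    have hκκ₂ : κ < κ₂ := lt_of_lt_of_le hκδ (le_trans (min_le_left _ _) (min_le_right _ _))
    have hκd264 : κ < d/264 := lt_of_lt_of_le hκδ (le_trans (min_le_right _ _) (min_le_left _ _))
    have hκsmall : κ < 1/8450 := lt_of_lt_of_le hκδ (le_trans (min_le_right _ _) (min_le_right _ _))
    have hκ4225 : κ < 1/4225 := by linarith
    have hcc : |c κ - c 0| ≤ min (1/20) (d/56) := by
      rcases h0κ.eq_or_lt with h | hκpos
      · rw [← h]; simp; positivity
      · exact le_of_lt (hκ₁c κ hκpos hκκ₁)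
    have hρρ : |ρsel κ - R0| ≤ δ'/2 := by
      rcases h0κ.eq_or_lt with h | hκpos
      · rw [← h, ← hR0def]; simp; positivity
      · exact le_of_lt (hκ₂ρ κ hκpos hκκ₂)
    have hcc1 : |c κ - c 0| ≤ 1/20 := le_trans hcc (min_le_left _ _)
    have hcc2 : |c κ - c 0| ≤ d/56 := le_trans hcc (min_le_right _ _)
    have hccl := abs_le.1 hcc1
    have hc8 : c κ < 8 := by
      rcases h0κ.eq_or_lt with h | hκpos
      · rw [← h]; linarith
      · exact c_lt_eight hck hκpos (by linarith)
    have hb2 : 2 < (c 0)^2 := c0_sq_gt_two hc01 hc0eq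
    have hbκ : (3:ℝ)/2 < (c κ)^2 := by
      have h1 : (0:ℝ) ≤ c 0 - 1/20 := by linarith only [hc01]
      have h2 : (c 0 - 1/20)^2 ≤ (c κ)^2 :=
        pow_le_pow_left₀ h1 (by linarith only [hccl.1]) 2
      have h3 : (3:ℝ)/2 < (c 0 - 1/20)^2 := by
        have hexp : (c 0 - 1/20)^2 = (c 0)^2 - (1/10) * c 0 + 1/400 := by ring
        rw [hexp]
        linarith only [hb2, hc05]
      linarith only [h2, h3]
    have hb64 : (c κ)^2 ≤ 64 := by
      have := pow_le_pow_left₀ (le_of_lt (hcpos κ h0κ)) (le_of_lt hc8) 2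
      linarith only [this]
    set lam := κ + 1/(1-m) with hlamdef
    clear_value lam
    have h1m : (0:ℝ) < 1 - m := by linarith
    have hlam1 : 1 ≤ lam := by
      rw [hlamdef]
      have : 1 ≤ 1/(1-m) := by
        rw [le_div_iff₀ h1m]; linarith
      linarith
    have hlamub : lam ≤ 143/100 := by
      rw [hlamdef]
      have : 1/(1-m) ≤ 4/3 := by
        rw [div_le_iff₀ h1m]; linarith
      linarith
    have hlamb : lam < (c κ)^2 := by linarith
    obtain ⟨r, hrs, hre, hr0⟩ := Ffun_root hlam1 hlamb hb64
    -- F_lam at p is positive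
    have hdp := abs_le.1 (hdiffF κ h0κ (min (1/20) (d/56))
      (lt_min (by norm_num) (by positivity)) hcc hc8 p (le_of_lt hp1)
      (by linarith [hR0e]))
    have hεcd : min (1/20 : ℝ) (d/56) ≤ d/56 := min_le_right _ _
    rw [← hddef] at hdp
    have hFκp : d - d/4 ≤ Ffun ((c κ)^2) (κ+1) p := by
      have h1 : 13/2 * min (1/20 : ℝ) (d/56) + 34 * κ ≤ d/4 := by
        have h2 : 13/2 * min (1/20 : ℝ) (d/56) ≤ 13/2 * (d/56) := by
          linarith only [hεcd]
        linarith only [h2, hκd264, hd]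
      linarith only [h1, hdp.1]
    have hmuid : lam - (κ+1) = m/(1-m) := by
      rw [hlamdef]
      field_simp
      ring
    have hFlamp : Ffun ((c κ)^2) lam p = Ffun ((c κ)^2) (κ+1) p - (m/(1-m)) * Real.log p := by
      unfold Ffun
      linear_combination (-(Real.log p)) * hmuid
    have hlogp0 : 0 ≤ Real.log p := Real.log_nonneg (le_of_lt hp1)
    have hlogp33 : Real.log p ≤ 33 := by
      calc Real.log p ≤ Real.log (Real.exp 33) :=
            Real.log_le_log (by linarith) (by linarith [hR0e])
        _ = 33 := Real.log_exp 33
    have hmu43 : m/(1-m) ≤ 4/3 * m := by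
      rw [div_le_iff₀ h1m]
      have h9 := mul_le_mul_of_nonneg_left hm14 (le_of_lt hm0)
      have hexp : 4/3 * m * (1-m) = 4/3 * m - 4/3 * (m * m) := by ring
      rw [hexp]
      linarith only [h9, hm0]
    have hmu0 : 0 ≤ m/(1-m) := by positivity
    have hFlampos : 0 < Ffun ((c κ)^2) lam p := by
      rw [hFlamp]
      have h1 : (m/(1-m)) * Real.log p ≤ (4/3 * m) * 33 :=
        mul_le_mul hmu43 hlogp33 hlogp0 (by positivity)
      linarith only [h1, hFκp, hmd, hd]
    have hpr : p ≤ r := by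
      by_contra hcon
      push_neg at hcon
      have := Ffun_neg (by linarith : (0:ℝ) < lam) hlamb hrs hr0 p hcon
      linarith
    -- representation of x
    obtain ⟨ρ, ⟨h1ρ, hFx, hGx⟩, hρR⟩ := hrep κ h0κ hκ4225 x hx
    have hx0 : 0 ≤ x := by
      have hx' := hx
      rcases h0κ.eq_or_lt with h | hκpos
      · rw [← h] at hx'; rw [Gdom, if_pos rfl] at hx'; exact hx'.1
      · rw [Gdom, if_neg (ne_of_gt hκpos)] at hx'; exact hx'.1
    have hxa' : x ≤ Real.log (ρsel κ) - δ' := by linarith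
    have hρler : ρ ≤ r := by
      by_contra hcon
      push_neg at hcon
      have hρlta : ρ ≤ ρsel κ := hcomp κ h0κ hκ4225 ρ h1ρ hρR
        (by rw [hFx]; linarith)
      have hK := Ffun_nonneg (by linarith : (0:ℝ) < κ+1)
        (by linarith [hksq κ h0κ] : κ+1 < (c κ)^2) (hsel1 κ h0κ hκ4225)
        (hsel3 κ h0κ hκ4225) ρ h1ρ hρlta
      rw [Kid, hFx] at hK
      have hloglip := log_lip h1ρ hρlta
      have hρρ2 := abs_le.1 hρρ
      -- ρsel κ - r ≤ δ'  since ρsel κ ≤ R0 + δ'/2 and r ≥ p = R0 - δ'/2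
      have h5 : ρsel κ - r ≤ δ' := by
        rw [hpdef] at hpr
        linarith only [hpr, hρρ2.2]
      linarith only [hxa', hK, hloglip, h5, hcon]
    have hFlamρ : 0 ≤ Ffun ((c κ)^2) lam ρ :=
      Ffun_nonneg (by linarith : (0:ℝ) < lam) hlamb hrs hr0 ρ h1ρ hρler
    have hlamid : (1-m) * lam = κ * (1-m) + 1 := by
      rw [hlamdef]
      field_simp
    have hid2 : Ffun ((c κ)^2) (κ+1) ρ - m * Ffun ((c κ)^2) κ ρ
        = (1-m) * Ffun ((c κ)^2) lam ρ := by
      unfold Ffun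
      linear_combination (Real.log ρ) * hlamid
    have hKmx : m * x ≤ Ffun ((c κ)^2) (κ+1) ρ := by
      have h1 : 0 ≤ (1-m) * Ffun ((c κ)^2) lam ρ :=
        mul_nonneg (by linarith only [hm1]) hFlamρ
      rw [hFx] at hid2
      linarith only [h1, hid2]
    have hK0x : 0 ≤ Ffun ((c κ)^2) (κ+1) ρ :=
      le_trans (mul_nonneg (le_of_lt hm0) hx0) hKmx
    have hxeq : x = Ffun ((c κ)^2) (κ+1) ρ + Real.log ρ := by
      rw [Kid, hFx]; ring
    have hexpx : Real.exp x = ρ * Real.exp (Ffun ((c κ)^2) (κ+1) ρ) := by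
      rw [hxeq, Real.exp_add, Real.exp_log (by linarith), mul_comm]
    have hexpK := Real.add_one_le_exp (Ffun ((c κ)^2) (κ+1) ρ)
    rw [hGx, hexpx]
    have hh1 : ρ * (Ffun ((c κ)^2) (κ+1) ρ + 1) ≤ ρ * Real.exp (Ffun ((c κ)^2) (κ+1) ρ) :=
      mul_le_mul_of_nonneg_left hexpK (by linarith)
    have hh2 : 0 ≤ (ρ - 1) * Ffun ((c κ)^2) (κ+1) ρ :=
      mul_nonneg (by linarith only [h1ρ]) hK0x
    linarith only [hh1, hh2, hKmx]
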